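/- Define f : ℝ → ℝ by f(x) = ((1+x)/2)·log(1+x) + ((1−x)/2)·log(1−x). Then for every real x with |x| ≤ 1, the series Σ_{n=0}^∞ x^{2n+2} / (2·(n+1)·(2n+1)) converges to f(x); i.e. the family (fun n : ℕ => x^(2n+2) / (2·(n+1)·(2n+1))) has sum f(x). Equivalently, for 0 < |x| ≤ 1, f(x)/x² = Σ_{n=0}^∞ x^{2n} / (2·(n+1)·(2n+1)). -/

import Mathlib

noncomputable section

open Real Filter Finset Topology

/-- The binary-entropy-like function `f(x) = ((1+x)/2)·log(1+x) + ((1−x)/2)·log(1−x)`. -/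
def fAsym (x : ℝ) : ℝ :=
  ((1 + x) / 2) * Real.log (1 + x) + ((1 - x) / 2) * Real.log (1 - x)

/-- Partial sums telescope to a difference of harmonic numbers. -/
lemma partial_sum_eq_harmonic (N : ℕ) :
    ∑ n ∈ Finset.range N, (1 : ℝ) / (2 * ((n : ℝ) + 1) * (2 * (n : ℝ) + 1)) =
      (harmonic (2 * N) : ℝ) - (harmonic N : ℝ) := by
  induction N with
  | zero => simp
  | succ N ih =>
    rw [Finset.sum_range_succ, ih]
    have h1 : 2 * (N + 1) = (2 * N + 1) + 1 := by ring
    rw [h1, harmonic_succ, harmonic_succ, harmonic_succ]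
    push_cast
    have h2 : (2 * (N : ℝ) + 1) ≠ 0 := by positivity
    have h3 : (2 * (N : ℝ) + 2) ≠ 0 := by positivity
    field_simp
    ring

lemma hasSum_one : HasSum (fun n : ℕ => (1 : ℝ) / (2 * ((n : ℝ) + 1) * (2 * (n : ℝ) + 1)))
    (Real.log 2) := by
  have s0 : Summable (fun n : ℕ => (1:ℝ) / (n:ℝ) ^ 2) :=
    Real.summable_one_div_nat_pow.mpr one_lt_two
  have s1 : Summable (fun n : ℕ => (1:ℝ) / ((n:ℝ) + 1) ^ 2) :=
    ((summable_nat_add_iff 1).mpr s0).congr (fun n => by push_cast; ring_nf)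
  have hsummable : Summable (fun n : ℕ => (1 : ℝ) / (2 * ((n : ℝ) + 1) * (2 * (n : ℝ) + 1))) := by
    refine s1.of_nonneg_of_le (fun n => by positivity) (fun n => ?_)
    have hn : (0:ℝ) ≤ (n:ℝ) := n.cast_nonneg
    rw [div_le_div_iff₀ (by positivity) (by positivity)]
    nlinarith
  rw [Summable.hasSum_iff_tendsto_nat hsummable]
  have key : Tendsto (fun N : ℕ => (harmonic (2 * N) : ℝ) - (harmonic N : ℝ)) atTop
      (𝓝 (Real.log 2)) := by
    have hmul : Tendsto (fun N : ℕ => 2 * N) atTop atTop :=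
      tendsto_atTop_mono (fun n => Nat.le_mul_of_pos_left n two_pos) tendsto_id
    have h2N : Tendsto (fun N : ℕ => (harmonic (2 * N) : ℝ) - Real.log (2 * N)) atTop
        (𝓝 eulerMascheroniConstant) := by
      have := Real.tendsto_harmonic_sub_log.comp hmul
      exact this.congr (fun N => by simp only [Function.comp_apply]; push_cast; ring_nf)
    have hN := Real.tendsto_harmonic_sub_log
    have := (h2N.sub hN).add (tendsto_const_nhds (x := Real.log 2))
    rw [sub_self, zero_add] at this
    apply this.congr'
    filter_upwards [eventually_ne_atTop 0] with N hN0
    have : Real.log (2 * N) = Real.log 2 + Real.log N := by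
      rw [← Real.log_mul two_ne_zero (Nat.cast_ne_zero.mpr hN0)]
    push_cast [this]
    ring
  exact key.congr' (by filter_upwards with N; rw [partial_sum_eq_harmonic])

lemma hasSum_lt_one {x : ℝ} (h : |x| < 1) :
    HasSum (fun n : ℕ => x ^ (2 * n + 2) / (2 * ((n : ℝ) + 1) * (2 * (n : ℝ) + 1)))
      (fAsym x) := by
  have h1x : (0:ℝ) < 1 + x := by cases abs_lt.mp h; linarith
  have h1x' : (0:ℝ) < 1 - x := by cases abs_lt.mp h; linarith
  -- series A : Σ x^(2k+2)/(2k+1) = (x/2)(log(1+x) - log(1-x))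
  have hA := (Real.hasSum_log_sub_log_of_abs_lt_one h).mul_left (x / 2)
  -- series B : Σ x^(2k+2)/(2(k+1)) = -log(1-x^2)/2
  have hx2 : |x ^ 2| < 1 := by
    rw [abs_pow]
    calc |x| ^ 2 ≤ |x| * 1 := by nlinarith [abs_nonneg x]
    _ < 1 := by simpa using h
  have hB := (Real.hasSum_pow_div_log_of_abs_lt_one hx2).mul_left (1 / 2)
  have hAB := hA.sub hB
  have heq : (fun k : ℕ => x / 2 * (2 * (1 / (2 * (k:ℝ) + 1)) * x ^ (2 * k + 1)) -
      1 / 2 * ((x ^ 2) ^ (k + 1) / ((k:ℝ) + 1))) =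
      fun n : ℕ => x ^ (2 * n + 2) / (2 * ((n : ℝ) + 1) * (2 * (n : ℝ) + 1)) := by
    funext k
    have h2 : (2 * (k : ℝ) + 1) ≠ 0 := by positivity
    have h3 : ((k : ℝ) + 1) ≠ 0 := by positivity
    rw [← pow_mul]
    field_simp
    ring
  rw [heq] at hAB
  convert hAB using 1
  · rfl
  have hlog : Real.log (1 - x ^ 2) = Real.log (1 + x) + Real.log (1 - x) := by
    rw [← Real.log_mul h1x.ne' h1x'.ne']
    ring_nf
  rw [fAsym, hlog]
  ring


/-- **Power series expansion of `f`: for `|x| ≤ 1`,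
`f(x) = Σ_{n≥0} x^(2n+2)/(2(n+1)(2n+1))`; equivalently
`f(x)/x² = Σ_{n≥0} x^(2n)/(2(n+1)(2n+1))` for `x ≠ 0`.** -/
theorem fAsym_hasSum (x : ℝ) (hx : |x| ≤ 1) :
    HasSum (fun n : ℕ => x ^ (2 * n + 2) / (2 * ((n : ℝ) + 1) * (2 * (n : ℝ) + 1))) (fAsym x) ∧
    (x ≠ 0 →
      fAsym x / x ^ 2 = ∑' n : ℕ, x ^ (2 * n) / (2 * ((n : ℝ) + 1) * (2 * (n : ℝ) + 1))) := by
  have main : HasSum (fun n : ℕ => x ^ (2 * n + 2) / (2 * ((n : ℝ) + 1) * (2 * (n : ℝ) + 1)))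
      (fAsym x) := by
    rcases lt_or_eq_of_le hx with h | h
    · exact hasSum_lt_one h
    · have hx1 : x = 1 ∨ x = -1 := by
        rcases abs_eq (by norm_num : (0:ℝ) ≤ 1) |>.mp h with h1 | h1
        · exact Or.inl h1
        · exact Or.inr h1
      have hone := hasSum_one
      rcases hx1 with rfl | rfl
      · have : fAsym 1 = Real.log 2 := by
          show ((1+1)/2) * Real.log (1+1) + ((1-1)/2) * Real.log (1-1) = Real.log 2
          rw [show (1:ℝ) + 1 = 2 from by norm_num]
          norm_num
        rw [this]
        simpa using hone
      · have : fAsym (-1) = Real.log 2 := by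
          show ((1+(-1))/2) * Real.log (1+(-1)) + ((1-(-1))/2) * Real.log (1-(-1)) = Real.log 2
          rw [show (1:ℝ) - (-1) = 2 from by norm_num]
          norm_num
        rw [this]
        convert hone using 2 with n
        rw [Even.neg_one_pow ⟨n + 1, by ring⟩]
  refine ⟨main, fun hx0 => ?_⟩
  have hx2 : x ^ 2 ≠ 0 := pow_ne_zero 2 hx0
  have h2 : HasSum (fun n : ℕ => x ^ 2 * (x ^ (2 * n) / (2 * ((n : ℝ) + 1) * (2 * (n : ℝ) + 1))))
      (x ^ 2 * (fAsym x / x ^ 2)) := by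
    rw [mul_div_cancel₀ _ hx2]
    convert main using 2 with n
    rw [← mul_div_assoc, ← pow_add]
    ring_nf
  exact ((hasSum_mul_left_iff hx2).mp h2).tsum_eq.symm

end
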